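/- Let A be an n×m real matrix with no zero rows and no zero columns, and let w ∈ ℝⁿ and v ∈ ℝ^m have strictly positive entries such that w_i² ∈ ℚ for every i and v_j² ∈ ℚ for every j. Then there exist multiplicities k : Fin n → ℕ₊ and l : Fin m → ℕ₊ such that the split matrix A' of A with multiplicities k and l satisfies √(n'·m')·‖A'‖ = ‖Ã‖·‖w‖·‖v‖, where n' = Σᵢ k_i, m' = Σⱼ l_j, ‖·‖ is the ℓ²→ℓ² operator norm, and Ã is the n×m matrix with entries ã_{ij} = a_{ij}/(w_i·v_j). -/

import Mathlib

/-
Splitting row `i` into `k i` copies and column `j` into `l j` copies is an isometric conjugation: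
`A' = P_k * C * P_lᴴ`, where `C i j = a i j / (√(k i) * √(l j))` and `P_k` has orthonormal
columns, so `‖A'‖ = ‖C‖` by the C*-identity `‖Xᴴ X‖ = ‖X‖²`. Clearing denominators gives
`D, E ∈ ℕ+` for which `k i = D * w i ^ 2` and `l j = E * v j ^ 2` are positive integers; then
`C = Ã / √(D E)` while `n' * m' = D E ‖w‖² ‖v‖²`.
-/

open scoped BigOperators

/-- The ℓ²→ℓ² operator norm of a real matrix. -/
noncomputable def l2OpNorm {α β : Type*} [Fintype α] [Fintype β] [DecidableEq β]
    (A : Matrix α β ℝ) : ℝ :=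
  ‖LinearMap.toContinuousLinearMap (Matrix.toEuclideanLin A)‖

/-- The ∞→1 norm of a real matrix: `max_{x ∈ {-1,1}ⁿ, y ∈ {-1,1}^m} xᵀ A y`. -/
noncomputable def normInftyOne {α β : Type*} [Fintype α] [Fintype β] (A : Matrix α β ℝ) : ℝ :=
  ⨆ p : (α → Bool) × (β → Bool),
    ∑ i, ∑ j, (if p.1 i then (1:ℝ) else -1) * A i j * (if p.2 j then (1:ℝ) else -1)

/-- The Grothendieck norm: sup over `k` and families of unit vectors of `Σ a_{ij} ⟨p_i, q_j⟩`. -/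
noncomputable def grothendieckNorm {α β : Type*} [Fintype α] [Fintype β]
    (A : Matrix α β ℝ) : ℝ :=
  sSup { r : ℝ | ∃ (k : ℕ) (p : α → EuclideanSpace ℝ (Fin k)) (q : β → EuclideanSpace ℝ (Fin k)),
    (∀ i, ‖p i‖ = 1) ∧ (∀ j, ‖q j‖ = 1) ∧
    r = ∑ i, ∑ j, A i j * (inner ℝ (p i) (q j) : ℝ) }

/-- The matrix obtained from `A` by splitting row `i` into `k i` equal rows and
column `j` into `l j` equal columns. -/
noncomputable def splitMatrix {n m : ℕ} (A : Matrix (Fin n) (Fin m) ℝ)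
    (k : Fin n → ℕ+) (l : Fin m → ℕ+) :
    Matrix ((i : Fin n) × Fin (k i : ℕ)) ((j : Fin m) × Fin (l j : ℕ)) ℝ :=
  fun p q => A p.1 q.1 / (((k p.1 : ℕ) : ℝ) * ((l q.1 : ℕ) : ℝ))

open scoped Matrix.Norms.L2Operator

namespace Matrix

section Isometry

variable {𝕜 ι κ μ : Type*} [RCLike 𝕜] [Fintype ι] [Fintype κ] [Fintype μ]

lemma l2OpNorm_eq_l2_opNorm [DecidableEq κ] (A : Matrix ι κ ℝ) : l2OpNorm A = ‖A‖ := rfl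

lemma l2_opNorm_mul_of_conjTranspose_mul_self_eq_one [DecidableEq κ] [DecidableEq μ]
    {P : Matrix ι κ 𝕜} (hP : Pᴴ * P = 1) (X : Matrix κ μ 𝕜) : ‖P * X‖ = ‖X‖ := by
  have h : ‖P * X‖ * ‖P * X‖ = ‖X‖ * ‖X‖ := by
    rw [← l2_opNorm_conjTranspose_mul_self, ← l2_opNorm_conjTranspose_mul_self,
      conjTranspose_mul, Matrix.mul_assoc, ← Matrix.mul_assoc Pᴴ, hP, Matrix.one_mul]
  exact (mul_self_inj (norm_nonneg _) (norm_nonneg _)).mp h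

lemma l2_opNorm_mul_conjTranspose_of_conjTranspose_mul_self_eq_one [DecidableEq ι]
    [DecidableEq κ] [DecidableEq μ] {Q : Matrix ι κ 𝕜} (hQ : Qᴴ * Q = 1) (X : Matrix μ κ 𝕜) :
    ‖X * Qᴴ‖ = ‖X‖ := by
  rw [← l2_opNorm_conjTranspose, conjTranspose_mul, conjTranspose_conjTranspose,
    l2_opNorm_mul_of_conjTranspose_mul_self_eq_one hQ, l2_opNorm_conjTranspose]

end Isometry

variable {ι : Type*} [Fintype ι] [DecidableEq ι]

noncomputable def splitIsometry (k : ι → ℕ+) : Matrix ((i : ι) × Fin (k i : ℕ)) ι ℝ :=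
  of fun p i => if p.1 = i then (√(k i : ℝ))⁻¹ else 0

lemma conjTranspose_splitIsometry_mul_self (k : ι → ℕ+) :
    (splitIsometry k)ᴴ * splitIsometry k = 1 := by
  ext i i'
  by_cases h : i = i'
  · subst h
    have hk : (0 : ℝ) < (k i : ℝ) := by positivity
    simp only [splitIsometry, conjTranspose_eq_transpose_of_trivial, mul_apply, transpose_apply,
      of_apply, mul_ite, ite_mul, zero_mul, mul_zero, Fintype.sum_sigma, Finset.sum_ite_irrel,
      Finset.sum_const_zero, Finset.sum_ite_eq', Finset.mem_univ, ↓reduceIte, Finset.sum_const,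
      Finset.card_univ, Fintype.card_fin, nsmul_eq_mul, one_apply_eq]
    rw [← mul_inv, Real.mul_self_sqrt hk.le, mul_inv_cancel₀ hk.ne']
  · simp [splitIsometry, mul_apply, Fintype.sum_sigma, h, Ne.symm h]

end Matrix

open Matrix

lemma splitMatrix_eq_splitIsometry_mul_mul_conjTranspose {n m : ℕ}
    (A : Matrix (Fin n) (Fin m) ℝ) (k : Fin n → ℕ+) (l : Fin m → ℕ+) :
    splitMatrix A k l = splitIsometry k * of (fun i j => A i j / (√(k i : ℝ) * √(l j : ℝ))) *
      (splitIsometry l)ᴴ := by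
  ext p q
  have hk : (0 : ℝ) ≤ (k p.1 : ℝ) := by positivity
  have hl : (0 : ℝ) ≤ (l q.1 : ℝ) := by positivity
  simp only [splitMatrix, splitIsometry, conjTranspose_eq_transpose_of_trivial, mul_apply,
    of_apply, ite_mul, zero_mul, Finset.sum_ite_eq, Finset.mem_univ, ↓reduceIte, transpose_apply,
    mul_ite, mul_zero]
  field_simp
  rw [Real.sq_sqrt hk, Real.sq_sqrt hl]

lemma l2OpNorm_splitMatrix {n m : ℕ} (A : Matrix (Fin n) (Fin m) ℝ)
    (k : Fin n → ℕ+) (l : Fin m → ℕ+) :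
    l2OpNorm (splitMatrix A k l) =
      l2OpNorm (of fun i j => A i j / (√(k i : ℝ) * √(l j : ℝ))) := by
  rw [l2OpNorm_eq_l2_opNorm, l2OpNorm_eq_l2_opNorm,
    splitMatrix_eq_splitIsometry_mul_mul_conjTranspose,
    l2_opNorm_mul_conjTranspose_of_conjTranspose_mul_self_eq_one
      (conjTranspose_splitIsometry_mul_self l),
    l2_opNorm_mul_of_conjTranspose_mul_self_eq_one (conjTranspose_splitIsometry_mul_self k)]

lemma exists_pnat_mul_eq_pnat {ι : Type*} [Fintype ι] (q : ι → ℚ) (hq : ∀ i, 0 < q i) :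
    ∃ (D : ℕ+) (k : ι → ℕ+), ∀ i, (k i : ℚ) = q i * D := by
  classical
  let D : ℕ+ := ⟨∏ i, (q i).den, Finset.prod_pos fun i _ => (q i).pos⟩
  have hden (i : ι) : (q i).den ∣ (D : ℕ) := Finset.dvd_prod_of_mem _ (Finset.mem_univ i)
  have hnum (i : ι) : 0 < (q i).num := Rat.num_pos.mpr (hq i)
  have hk (i : ι) : 0 < (q i).num.natAbs * ((D : ℕ) / (q i).den) :=
    Nat.mul_pos (Int.natAbs_pos.mpr (hnum i).ne')
      (Nat.div_pos (Nat.le_of_dvd D.pos (hden i)) (q i).pos)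
  refine ⟨D, fun i => ⟨_, hk i⟩, fun i => ?_⟩
  obtain ⟨c, hc⟩ := hden i
  simp only [PNat.mk_coe, hc, Nat.mul_div_cancel_left _ (q i).pos]
  push_cast
  rw [Nat.cast_natAbs, abs_of_pos (hnum i), ← mul_assoc, Rat.mul_den_eq_num]

lemma exists_pnat_mul_eq_pnat_of_rat {ι : Type*} [Fintype ι] (x : ι → ℝ) (hx : ∀ i, 0 < x i)
    (hxq : ∀ i, ∃ q : ℚ, (q : ℝ) = x i) :
    ∃ (D : ℕ+) (k : ι → ℕ+), ∀ i, (k i : ℝ) = x i * D := by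
  choose q hq using hxq
  obtain ⟨D, k, hk⟩ := exists_pnat_mul_eq_pnat q fun i => by exact_mod_cast (hq i).symm ▸ hx i
  exact ⟨D, k, fun i => by rw [← hq i]; exact_mod_cast hk i⟩

theorem splitting_realizes_rational_weights_general (n m : ℕ) (A : Matrix (Fin n) (Fin m) ℝ)
    (w : Fin n → ℝ) (v : Fin m → ℝ)
    (hw : ∀ i, 0 < w i) (hv : ∀ j, 0 < v j)
    (hwq : ∀ i, ∃ q : ℚ, (q : ℝ) = w i ^ 2) (hvq : ∀ j, ∃ q : ℚ, (q : ℝ) = v j ^ 2)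
    (Atil : Matrix (Fin n) (Fin m) ℝ)
    (hAtil : ∀ i j, Atil i j = A i j / (w i * v j)) :
    ∃ (k : Fin n → ℕ+) (l : Fin m → ℕ+),
      Real.sqrt ((∑ i, ((k i : ℕ) : ℝ)) * (∑ j, ((l j : ℕ) : ℝ))) * l2OpNorm (splitMatrix A k l)
        = l2OpNorm Atil * Real.sqrt (∑ i, w i ^ 2) * Real.sqrt (∑ j, v j ^ 2) := by
  obtain ⟨D, k, hk⟩ := exists_pnat_mul_eq_pnat_of_rat _ (fun i => pow_pos (hw i) 2) hwq
  obtain ⟨E, l, hl⟩ := exists_pnat_mul_eq_pnat_of_rat _ (fun j => pow_pos (hv j) 2) hvq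
  refine ⟨k, l, ?_⟩
  have hrescale : of (fun i j => A i j / (√(k i : ℝ) * √(l j : ℝ)))
      = (√(D : ℝ) * √(E : ℝ))⁻¹ • Atil := by
    ext i j
    simp only [hk, hl, Real.sqrt_mul (sq_nonneg _), Real.sqrt_sq (hw i).le,
      Real.sqrt_sq (hv j).le, of_apply, Matrix.smul_apply, smul_eq_mul, hAtil]
    field_simp
  have hsum_k : ∑ i, (k i : ℝ) = (∑ i, w i ^ 2) * D := by simp only [hk, Finset.sum_mul]
  have hsum_l : ∑ j, (l j : ℝ) = (∑ j, v j ^ 2) * E := by simp only [hl, Finset.sum_mul]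
  rw [l2OpNorm_splitMatrix, hrescale, l2OpNorm_eq_l2_opNorm, norm_smul, ← l2OpNorm_eq_l2_opNorm,
    Real.norm_of_nonneg (by positivity), hsum_k, hsum_l, Real.sqrt_mul (by positivity),
    Real.sqrt_mul (by positivity), Real.sqrt_mul (by positivity)]
  field_simp

/-- If `w, v` have positive entries with rational squares, then some splitting
`A'` of `A` satisfies `√(n'·m')·‖A'‖ = ‖Ã‖·‖w‖·‖v‖`, where `ã_{ij} = a_{ij}/(w_i·v_j)`. -/
theorem splitting_realizes_rational_weights (n m : ℕ) (A : Matrix (Fin n) (Fin m) ℝ)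
    (hrow : ∀ i, ∃ j, A i j ≠ 0) (hcol : ∀ j, ∃ i, A i j ≠ 0)
    (w : Fin n → ℝ) (v : Fin m → ℝ)
    (hw : ∀ i, 0 < w i) (hv : ∀ j, 0 < v j)
    (hwq : ∀ i, ∃ q : ℚ, (q : ℝ) = w i ^ 2) (hvq : ∀ j, ∃ q : ℚ, (q : ℝ) = v j ^ 2)
    (Atil : Matrix (Fin n) (Fin m) ℝ)
    (hAtil : ∀ i j, Atil i j = A i j / (w i * v j)) :
    ∃ (k : Fin n → ℕ+) (l : Fin m → ℕ+),
      Real.sqrt ((∑ i, ((k i : ℕ) : ℝ)) * (∑ j, ((l j : ℕ) : ℝ))) * l2OpNorm (splitMatrix A k l)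
        = l2OpNorm Atil * Real.sqrt (∑ i, w i ^ 2) * Real.sqrt (∑ j, v j ^ 2) :=
  splitting_realizes_rational_weights_general n m A w v hw hv hwq hvq Atil hAtil
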